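/- arXiv:1601.00194 — 5 statements merged into one kernel-verified Lean document; each statement's English description precedes it below -/
import Mathlib

section
/- If f : ℝ^m → ℝ is differentiable with L-Lipschitz continuous gradient, then for all x, y: (∇f(x) − ∇f(y))ᵀ(x − y) ≥ (1/L)‖∇f(x) − ∇f(y)‖₂² (cocoercivity of the gradient). -/
/-!
The descent lemma `f y ≤ f x + ⟪g x, y - x⟫ + L / 2 * ‖y - x‖ ^ 2` holds because
`t ↦ f (x + t • v) - t * ⟪g x, v⟫ - L / 2 * t ^ 2 * ‖v‖ ^ 2` has nonpositive derivative for `t ≥ 0`.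
Applied at a gradient step from `y` to the convex function `u ↦ f u - ⟪g x, u⟫`, whose minimum
is attained at `x`, it gives `f x + ⟪g x, y - x⟫ + ‖g y - g x‖ ^ 2 / (2 * L) ≤ f y`.
Adding this to the same inequality with `x` and `y` exchanged yields cocoercivity.
-/

open scoped InnerProductSpace

variable {E : Type*} [NormedAddCommGroup E] [InnerProductSpace ℝ E] {f : E → ℝ} {g : E → E}

theorem ConvexOn.sub_inner (hf : ConvexOn ℝ Set.univ f) (w : E) :
    ConvexOn ℝ Set.univ (fun u => f u - ⟪w, u⟫_ℝ) :=
  hf.sub ((innerₛₗ ℝ w).concaveOn convex_univ)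

variable [CompleteSpace E]

theorem HasGradientAt.hasDerivAt_add_smul {g' x v : E} {t : ℝ}
    (hf : HasGradientAt f g' (x + t • v)) :
    HasDerivAt (fun s : ℝ => f (x + s • v)) ⟪g', v⟫_ℝ t := by
  have hline : HasDerivAt (fun s : ℝ => x + s • v) v t := by
    simpa using ((hasDerivAt_id t).smul_const v).const_add x
  exact (hasGradientAt_iff_hasFDerivAt.mp hf).comp_hasDerivAt t hline

theorem HasGradientAt.sub_inner {g' w x : E} (hf : HasGradientAt f g' x) :
    HasGradientAt (fun u => f u - ⟪w, u⟫_ℝ) (g' - w) x := by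
  rw [hasGradientAt_iff_hasFDerivAt, map_sub]
  exact (hasGradientAt_iff_hasFDerivAt.mp hf).sub (InnerProductSpace.toDual ℝ E w).hasFDerivAt

theorem ConvexOn.add_inner_sub_le {g' x : E} (hf : ConvexOn ℝ Set.univ f)
    (hg : HasGradientAt f g' x) (y : E) : f x + ⟪g', y - x⟫_ℝ ≤ f y := by
  have hline : ConvexOn ℝ Set.univ (fun t : ℝ => f (x + t • (y - x))) := by
    have h := hf.comp_affineMap (AffineMap.lineMap x y)
    rw [Set.preimage_univ] at h
    have hcomp : (fun t : ℝ => f (x + t • (y - x))) = f ∘ AffineMap.lineMap x y := by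
      funext t
      simp [AffineMap.lineMap_apply, add_comm]
    rwa [hcomp]
  have hslope := hline.le_slope_of_hasDerivAt (Set.mem_univ 0) (Set.mem_univ 1) zero_lt_one
    (HasGradientAt.hasDerivAt_add_smul (by simpa using hg))
  simp only [slope_def_field, one_smul, zero_smul, add_zero, sub_zero, div_one,
    add_sub_cancel] at hslope
  linarith

theorem le_add_inner_sub_add_sq_of_lipschitz_gradient {L : ℝ}
    (hgrad : ∀ x, HasGradientAt f (g x) x) (hlip : ∀ x y, ‖g x - g y‖ ≤ L * ‖x - y‖)
    (x y : E) : f y ≤ f x + ⟪g x, y - x⟫_ℝ + L / 2 * ‖y - x‖ ^ 2 := by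
  set v := y - x
  set φ : ℝ → ℝ := fun t => f (x + t • v) - t * ⟪g x, v⟫_ℝ - L / 2 * t ^ 2 * ‖v‖ ^ 2
  have hφ : ∀ t, HasDerivAt φ (⟪g (x + t • v) - g x, v⟫_ℝ - L * t * ‖v‖ ^ 2) t := by
    intro t
    have h := ((hgrad (x + t • v)).hasDerivAt_add_smul.sub
      ((hasDerivAt_id t).mul_const ⟪g x, v⟫_ℝ)).sub
      (((hasDerivAt_pow 2 t).const_mul (L / 2)).mul_const (‖v‖ ^ 2))
    refine h.congr_deriv ?_
    rw [inner_sub_left]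
    ring
  have hφ' : ∀ t, 0 ≤ t → ⟪g (x + t • v) - g x, v⟫_ℝ - L * t * ‖v‖ ^ 2 ≤ 0 := by
    intro t ht
    rw [sub_nonpos]
    have hstep : ‖g (x + t • v) - g x‖ ≤ L * (t * ‖v‖) := by
      simpa [norm_smul, abs_of_nonneg ht] using hlip (x + t • v) x
    calc ⟪g (x + t • v) - g x, v⟫_ℝ ≤ ‖g (x + t • v) - g x‖ * ‖v‖ := real_inner_le_norm _ _
      _ ≤ L * (t * ‖v‖) * ‖v‖ := by gcongr
      _ = L * t * ‖v‖ ^ 2 := by ring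
  have hanti : AntitoneOn φ (Set.Ici 0) :=
    antitoneOn_of_hasDerivWithinAt_nonpos (convex_Ici 0)
      (fun t _ => (hφ t).continuousAt.continuousWithinAt)
      (fun t _ => (hφ t).hasDerivWithinAt)
      (fun t ht => hφ' t (interior_subset ht))
  have hφ01 : φ 1 ≤ φ 0 := hanti Set.self_mem_Ici (Set.mem_Ici.mpr zero_le_one) zero_le_one
  simp only [φ, v, one_smul, zero_smul, add_zero, add_sub_cancel, one_mul, one_pow, mul_one,
    zero_mul, sub_zero, ne_eq, OfNat.ofNat_ne_zero, not_false_eq_true, zero_pow, mul_zero] at hφ01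
  linarith

theorem apply_sub_inv_smul_le_of_lipschitz_gradient {L : ℝ} (hL : L ≠ 0)
    (hgrad : ∀ x, HasGradientAt f (g x) x) (hlip : ∀ x y, ‖g x - g y‖ ≤ L * ‖x - y‖)
    (y : E) : f (y - L⁻¹ • g y) ≤ f y - 1 / (2 * L) * ‖g y‖ ^ 2 := by
  have hdescent := le_add_inner_sub_add_sq_of_lipschitz_gradient hgrad hlip y (y - L⁻¹ • g y)
  rw [sub_sub_cancel_left, inner_neg_right, real_inner_smul_right, real_inner_self_eq_norm_sq,
    norm_neg, norm_smul, mul_pow, Real.norm_eq_abs, sq_abs] at hdescent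
  calc f (y - L⁻¹ • g y) ≤ f y + -(L⁻¹ * ‖g y‖ ^ 2) + L / 2 * (L⁻¹ ^ 2 * ‖g y‖ ^ 2) := hdescent
    _ = f y - 1 / (2 * L) * ‖g y‖ ^ 2 := by field_simp; ring

theorem ConvexOn.add_inner_sub_add_sq_norm_sub_le_of_lipschitz_gradient {L : ℝ} (hL : L ≠ 0)
    (hconv : ConvexOn ℝ Set.univ f) (hgrad : ∀ x, HasGradientAt f (g x) x)
    (hlip : ∀ x y, ‖g x - g y‖ ≤ L * ‖x - y‖) (x y : E) :
    f x + ⟪g x, y - x⟫_ℝ + 1 / (2 * L) * ‖g y - g x‖ ^ 2 ≤ f y := by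
  set F : E → ℝ := fun u => f u - ⟪g x, u⟫_ℝ
  have hFgrad : ∀ u, HasGradientAt F (g u - g x) u := fun u => (hgrad u).sub_inner
  have hFlip : ∀ u w, ‖(g u - g x) - (g w - g x)‖ ≤ L * ‖u - w‖ := by
    simpa only [sub_sub_sub_cancel_right] using hlip
  have hmin : F x ≤ F (y - L⁻¹ • (g y - g x)) := by
    simpa only [sub_self, inner_zero_left, add_zero] using
      (hconv.sub_inner (g x)).add_inner_sub_le (hFgrad x) (y - L⁻¹ • (g y - g x))
  have hstep := apply_sub_inv_smul_le_of_lipschitz_gradient hL hFgrad hFlip y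
  simp only [F, inner_sub_right] at hmin hstep ⊢
  linarith

theorem stmt2 (m : ℕ) (f : EuclideanSpace ℝ (Fin m) → ℝ)
    (g : EuclideanSpace ℝ (Fin m) → EuclideanSpace ℝ (Fin m))
    (L : ℝ) (hL : 0 < L)
    (hconv : ConvexOn ℝ Set.univ f)
    (hgrad : ∀ x, HasGradientAt f (g x) x)
    (hlip : ∀ x y, ‖g x - g y‖ ≤ L * ‖x - y‖) :
    ∀ x y, (1 / L) * ‖g x - g y‖ ^ 2 ≤ ⟪g x - g y, x - y⟫_ℝ := by
  intro x y
  have hxy := hconv.add_inner_sub_add_sq_norm_sub_le_of_lipschitz_gradient hL.ne' hgrad hlip x y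
  have hyx := hconv.add_inner_sub_add_sq_norm_sub_le_of_lipschitz_gradient hL.ne' hgrad hlip y x
  rw [norm_sub_rev] at hxy
  have hsum : ⟪g x, y - x⟫_ℝ + ⟪g y, x - y⟫_ℝ = -⟪g x - g y, x - y⟫_ℝ := by
    rw [← neg_sub x y, inner_neg_right, inner_sub_left]
    ring
  have hcoef : 1 / L = 2 * (1 / (2 * L)) := by field_simp
  rw [hcoef]
  linarith
end

section
/- Let G = (V,E) be a connected graph with n nodes, let A be an n×n real matrix with A_{ij} = 0 for j ∉ N(i) (with N(i) the closed neighborhood of i) and with each row summing to zero (Σ_j A_{lj} = 0 for all l), with every node of degree d_l ≥ 1. Let D be the diagonal matrix with D_{ll} = d_l + 1 and M the diagonal matrix with M_{ii} = Σ_l A_{li}². Then the symmetric matrix M − AᵀD⁻¹A is positive semidefinite. -/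
/-!
Split `M - AᵀD⁻¹A` row by row of `A`: row `a = A l` contributes
`diagonal (a ^ 2) - (d_l + 1)⁻¹ • a aᵀ`, whose quadratic form `∑ (aᵢxᵢ)² - (∑ aᵢxᵢ)² / (d_l + 1)`
is nonnegative by Cauchy–Schwarz, because `a` is supported on the closed neighbourhood of `l`,
which has `d_l + 1` vertices. A sum of positive semidefinite matrices is positive semidefinite.
-/

open Matrix Finset

theorem Matrix.posSemidef_diagonal_sq_sub_smul_vecMulVec {n : Type*} [Fintype n] [DecidableEq n]
    {a : n → ℝ} {s : Finset n} (ha : ∀ i ∉ s, a i = 0) {w : ℝ} (hw₀ : 0 ≤ w)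
    (hw : w * #s ≤ 1) :
    (diagonal (fun i => a i ^ 2) - w • vecMulVec a a).PosSemidef := by
  have hrank : (vecMulVec a a).IsHermitian := by
    simpa using (posSemidef_vecMulVec_self_star a).isHermitian
  refine .of_dotProduct_mulVec_nonneg ((isHermitian_diagonal _).sub (hrank.smul (.all w)))
    fun x => ?_
  have hsum : a ⬝ᵥ x = ∑ i ∈ s, a i * x i :=
    (sum_subset (subset_univ s) fun i _ hi => by simp [ha i hi]).symm
  have hquad : star x ⬝ᵥ ((diagonal (fun i => a i ^ 2) - w • vecMulVec a a) *ᵥ x)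
      = ∑ i, (a i * x i) ^ 2 - w * (a ⬝ᵥ x) ^ 2 := by
    simp only [star_trivial, sub_mulVec, smul_mulVec, vecMulVec_mulVec, dotProduct_sub,
      dotProduct_smul, op_smul_eq_smul, smul_eq_mul, dotProduct_comm x a]
    simp only [dotProduct, mulVec_diagonal]
    congr 1
    · exact sum_congr rfl fun i _ => by ring
    · ring
  rw [hquad, sub_nonneg]
  calc w * (a ⬝ᵥ x) ^ 2 ≤ w * (#s * ∑ i ∈ s, (a i * x i) ^ 2) := by
        rw [hsum]; exact mul_le_mul_of_nonneg_left sq_sum_le_card_mul_sum_sq hw₀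
    _ ≤ ∑ i ∈ s, (a i * x i) ^ 2 := by
        rw [← mul_assoc]
        exact mul_le_of_le_one_left (sum_nonneg fun i _ => sq_nonneg _) hw
    _ ≤ ∑ i, (a i * x i) ^ 2 :=
        sum_le_sum_of_subset_of_nonneg (subset_univ s) fun i _ _ => sq_nonneg _

theorem Matrix.transpose_mul_diagonal_mul_eq_sum {m n R : Type*} [Fintype m] [DecidableEq m]
    [CommSemiring R] (A : Matrix m n R) (w : m → R) :
    Aᵀ * diagonal w * A = ∑ l, w l • vecMulVec (A l) (A l) := by
  ext i j
  rw [mul_apply]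
  simp [mul_diagonal, sum_apply, vecMulVec_apply, mul_left_comm, mul_assoc]

theorem Matrix.posSemidef_diagonal_sum_sq_sub_transpose_mul_diagonal_mul {m n : Type*}
    [Fintype m] [Fintype n] [DecidableEq m] [DecidableEq n] (A : Matrix m n ℝ)
    (s : m → Finset n) (hA : ∀ l, ∀ i ∉ s l, A l i = 0) (w : m → ℝ) (hw₀ : ∀ l, 0 ≤ w l)
    (hw : ∀ l, w l * #(s l) ≤ 1) :
    (diagonal (fun i => ∑ l, A l i ^ 2) - Aᵀ * diagonal w * A).PosSemidef := by
  have hdiag : diagonal (fun i => ∑ l, A l i ^ 2) = ∑ l, diagonal (fun i => A l i ^ 2) := by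
    ext i j
    by_cases h : i = j <;> simp [h, sum_apply]
  rw [hdiag, transpose_mul_diagonal_mul_eq_sum, ← sum_sub_distrib]
  exact posSemidef_sum _ fun l _ =>
    posSemidef_diagonal_sq_sub_smul_vecMulVec (hA l) (hw₀ l) (hw l)

theorem SimpleGraph.card_insert_neighborFinset {V : Type*} (G : SimpleGraph V) [Fintype V]
    [DecidableEq V] [DecidableRel G.Adj] (v : V) :
    #(insert v (G.neighborFinset v)) = G.degree v + 1 := by
  rw [card_insert_of_notMem (by simp), card_neighborFinset_eq_degree]

theorem stmt4_general (n : ℕ) (G : SimpleGraph (Fin n)) [DecidableRel G.Adj]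
    (A : Matrix (Fin n) (Fin n) ℝ)
    (hsupp : ∀ i j, ¬ (G.Adj i j ∨ i = j) → A i j = 0) :
    (Matrix.diagonal (fun i => ∑ l, (A l i) ^ 2) -
      Aᵀ * Matrix.diagonal (fun l => ((G.degree l : ℝ) + 1)⁻¹) * A).PosSemidef := by
  refine posSemidef_diagonal_sum_sq_sub_transpose_mul_diagonal_mul A
    (fun l => insert l (G.neighborFinset l)) (fun l i hi => hsupp l i ?_) _
    (fun l => by positivity) fun l => ?_
  · simpa [or_comm, eq_comm] using hi
  · rw [G.card_insert_neighborFinset l]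
    push_cast
    rw [inv_mul_cancel₀ (by positivity)]

theorem stmt4 (n : ℕ) (G : SimpleGraph (Fin n)) [DecidableRel G.Adj]
    (hconn : G.Connected)
    (A : Matrix (Fin n) (Fin n) ℝ)
    (hsupp : ∀ i j, ¬ (G.Adj i j ∨ i = j) → A i j = 0)
    (hrow : ∀ l, ∑ j, A l j = 0)
    (hdeg : ∀ l, 1 ≤ G.degree l) :
    (Matrix.diagonal (fun i => ∑ l, (A l i) ^ 2) -
      Aᵀ * Matrix.diagonal (fun l => ((G.degree l : ℝ) + 1)⁻¹) * A).PosSemidef :=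
  stmt4_general n G A hsupp
end

section
/- Let F be convex, let (x*, r̂) be a saddle point of the Lagrangian L(x,r) = F(x) + c rᵀQx (so F(x*) ≤ F(x) + c r̂ᵀQx for all x, and Qx* = 0). If a point x̂ satisfies F(x̂) − F(x*) + c rᵀQx̂ ≤ B(r) for all r, where B(r) = (c/(2T))(‖x(0)−x*‖²_{M'} + ‖r(0) − r‖²), then |F(x̂) − F(x*)| ≤ (c/(2T))(‖x(0)−x*‖²_{M'} + max{‖r(0) − 2r̂‖², ‖r(0)‖²}). -/
open Matrix

/-- Testing the bound at `r = 0` gives the upper estimate; testing it at `r = 2 r̂` and adding the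
saddle inequality, which bounds the penalty term `c r̂ᵀv` below by `-d`, gives the lower one. -/
theorem abs_le_max_of_forall_add_dotProduct_le {ι : Type*} [Fintype ι] {d c : ℝ}
    {rhat v : ι → ℝ} {B : (ι → ℝ) → ℝ}
    (hbound : ∀ r, d + c * (r ⬝ᵥ v) ≤ B r) (hsaddle : -d ≤ c * (rhat ⬝ᵥ v)) :
    |d| ≤ max (B ((2 : ℝ) • rhat)) (B 0) := by
  have h0 := hbound 0
  have h2 := hbound ((2 : ℝ) • rhat)
  rw [zero_dotProduct, mul_zero, add_zero] at h0
  rw [smul_dotProduct, smul_eq_mul] at h2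
  rw [abs_le]
  constructor <;> linarith [le_max_left (B ((2 : ℝ) • rhat)) (B 0),
    le_max_right (B ((2 : ℝ) • rhat)) (B 0)]

theorem stmt11_general (n : ℕ) (F : (Fin n → ℝ) → ℝ)
    (Q M' : Matrix (Fin n) (Fin n) ℝ)
    (c T : ℝ) (hc : 0 < c) (hT : 0 < T)
    (xs rhat xhat x0 r0 : Fin n → ℝ)
    (hsaddle : ∀ x : Fin n → ℝ, F xs ≤ F x + c * (rhat ⬝ᵥ Q.mulVec x))
    (hbound : ∀ r : Fin n → ℝ,
      F xhat - F xs + c * (r ⬝ᵥ Q.mulVec xhat) ≤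
        c / (2 * T) * ((x0 - xs) ⬝ᵥ M'.mulVec (x0 - xs) + ∑ i, (r0 i - r i) ^ 2)) :
    |F xhat - F xs| ≤
      c / (2 * T) * ((x0 - xs) ⬝ᵥ M'.mulVec (x0 - xs) +
        max (∑ i, (r0 i - 2 * rhat i) ^ 2) (∑ i, (r0 i) ^ 2)) := by
  have hgap : -(F xhat - F xs) ≤ c * (rhat ⬝ᵥ Q.mulVec xhat) := by
    linarith [hsaddle xhat]
  have habs := abs_le_max_of_forall_add_dotProduct_le hbound hgap
  simp only [Pi.smul_apply, smul_eq_mul, Pi.zero_apply, sub_zero] at habs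
  rwa [← mul_max_of_nonneg _ _ (by positivity), max_add_add_left] at habs

theorem stmt11 (n : ℕ) (F : (Fin n → ℝ) → ℝ) (hF : ConvexOn ℝ Set.univ F)
    (Q M' : Matrix (Fin n) (Fin n) ℝ) (hQ : Q.PosSemidef) (hM : M'.PosSemidef)
    (c T : ℝ) (hc : 0 < c) (hT : 0 < T)
    (xs rhat xhat x0 r0 : Fin n → ℝ)
    (hfeas : Q.mulVec xs = 0)
    (hsaddle : ∀ x : Fin n → ℝ, F xs ≤ F x + c * (rhat ⬝ᵥ Q.mulVec x))
    (hbound : ∀ r : Fin n → ℝ,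
      F xhat - F xs + c * (r ⬝ᵥ Q.mulVec xhat) ≤
        c / (2 * T) * ((x0 - xs) ⬝ᵥ M'.mulVec (x0 - xs) + ∑ i, (r0 i - r i) ^ 2)) :
    |F xhat - F xs| ≤
      c / (2 * T) * ((x0 - xs) ⬝ᵥ M'.mulVec (x0 - xs) +
        max (∑ i, (r0 i - 2 * rhat i) ^ 2) (∑ i, (r0 i) ^ 2)) :=
  stmt11_general n F Q M' c T hc hT xs rhat xhat x0 r0 hsaddle hbound
end

section
/- Under the same saddle-point setup, the feasibility violation satisfies ‖Qx̂(T)‖₂ ≤ (1/(2T))(‖x(0)−x*‖²_{M'} + 2‖r(0) − r̂‖² + 2), obtained by taking r = r̂ + Qx̂(T)/‖Qx̂(T)‖ in the bound F(x̂) − F(x*) + c rᵀQx̂ ≤ (c/(2T))(‖x(0)−x*‖²_{M'} + ‖r(0) − r‖²) and using the saddle inequality F(x̂) − F(x*) + c r̂ᵀQx̂ ≥ 0. -/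
open Matrix

theorem stmt12 (n : ℕ) (F : (Fin n → ℝ) → ℝ) (hF : ConvexOn ℝ Set.univ F)
    (Q M' : Matrix (Fin n) (Fin n) ℝ) (hQ : Q.PosSemidef) (hM : M'.PosSemidef)
    (c T : ℝ) (hc : 0 < c) (hT : 0 < T)
    (xs rhat xhat x0 r0 : Fin n → ℝ)
    (hfeas : Q.mulVec xs = 0)
    (hsaddle : ∀ x : Fin n → ℝ, F xs ≤ F x + c * (rhat ⬝ᵥ Q.mulVec x))
    (hbound : ∀ r : Fin n → ℝ,
      F xhat - F xs + c * (r ⬝ᵥ Q.mulVec xhat) ≤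
        c / (2 * T) * ((x0 - xs) ⬝ᵥ M'.mulVec (x0 - xs) + ∑ i, (r0 i - r i) ^ 2))
    (hne : Q.mulVec xhat ≠ 0) :
    Real.sqrt (∑ i, (Q.mulVec xhat i) ^ 2) ≤
      1 / (2 * T) * ((x0 - xs) ⬝ᵥ M'.mulVec (x0 - xs) +
        2 * ∑ i, (r0 i - rhat i) ^ 2 + 2) := by
  set q := Q.mulVec xhat with hq
  set s := Real.sqrt (∑ i, q i ^ 2) with hs
  have hsum_pos : 0 < ∑ i, q i ^ 2 := by
    obtain ⟨i, hi⟩ := Function.ne_iff.mp hne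
    exact Finset.sum_pos' (fun i _ => sq_nonneg (q i))
      ⟨i, Finset.mem_univ i, by have hi' : q i ≠ 0 := hi; positivity⟩
  have hs_pos : 0 < s := Real.sqrt_pos.mpr hsum_pos
  have hs_sq : s ^ 2 = ∑ i, q i ^ 2 := Real.sq_sqrt hsum_pos.le
  set A := (x0 - xs) ⬝ᵥ M'.mulVec (x0 - xs) with hA
  set B := ∑ i, (r0 i - rhat i) ^ 2 with hB
  set r := rhat + s⁻¹ • q with hr
  have hdot : r ⬝ᵥ q = rhat ⬝ᵥ q + s := by
    rw [hr, add_dotProduct, smul_dotProduct]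
    congr 1
    have : q ⬝ᵥ q = s ^ 2 := by
      rw [hs_sq]; simp [dotProduct, sq]
    rw [smul_eq_mul, this]
    field_simp
  have hS : ∑ i, (r0 i - r i) ^ 2 ≤ 2 * B + 2 := by
    have h1 : ∀ i : Fin n, (r0 i - r i) ^ 2 ≤ 2 * (r0 i - rhat i) ^ 2 + 2 * (s⁻¹ * q i) ^ 2 := by
      intro i
      have : r0 i - r i = (r0 i - rhat i) - s⁻¹ * q i := by
        simp [hr]; ring
      rw [this]
      nlinarith [sq_nonneg ((r0 i - rhat i) + s⁻¹ * q i)]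
    calc ∑ i, (r0 i - r i) ^ 2
        ≤ ∑ i, (2 * (r0 i - rhat i) ^ 2 + 2 * (s⁻¹ * q i) ^ 2) :=
          Finset.sum_le_sum fun i _ => h1 i
      _ = 2 * B + 2 * (s⁻¹ ^ 2 * ∑ i, q i ^ 2) := by
          rw [Finset.sum_add_distrib, ← Finset.mul_sum, ← Finset.mul_sum]
          congr 2
          rw [Finset.mul_sum]
          exact Finset.sum_congr rfl fun i _ => by ring
      _ = 2 * B + 2 := by
          rw [← hs_sq]
          field_simp
  have hsad := hsaddle xhat
  have hb := hbound r
  rw [hdot] at hb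
  have key : c * s ≤ c / (2 * T) * (A + 2 * B + 2) := by
    have h2 : c / (2 * T) * (A + ∑ i, (r0 i - r i) ^ 2) ≤ c / (2 * T) * (A + (2 * B + 2)) := by
      apply mul_le_mul_of_nonneg_left (by linarith) (by positivity)
    nlinarith
  have key2 : c * s ≤ c * (1 / (2 * T) * (A + 2 * B + 2)) := by
    calc c * s ≤ c / (2 * T) * (A + 2 * B + 2) := key
      _ = c * (1 / (2 * T) * (A + 2 * B + 2)) := by ring
  exact le_of_mul_le_mul_left key2 hc
end

section
/- For a connected graph G with Laplacian P, maximum degree d_max, minimum degree d_min: the largest eigenvalue λ_M of M − PᵀD⁻¹P (with M_{ii} = Σ_l P_{li}², D = diag(d_l+1)) satisfies λ_M ≤ d_max(d_max + 1) + 4d_max²/(d_min + 1). -/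
open Matrix

theorem stmt16 (n : ℕ) (G : SimpleGraph (Fin n)) [DecidableRel G.Adj]
    (hconn : G.Connected) (dmax dmin : ℕ)
    (hdmax : ∀ i, G.degree i ≤ dmax) (hdmin : ∀ i, dmin ≤ G.degree i) :
    ∀ μ : ℝ,
      (∃ w : Fin n → ℝ, w ≠ 0 ∧
        (Matrix.diagonal (fun i => ∑ l, (G.lapMatrix ℝ l i) ^ 2) -
          (G.lapMatrix ℝ)ᵀ * Matrix.diagonal (fun l => ((G.degree l : ℝ) + 1)⁻¹) *
            G.lapMatrix ℝ).mulVec w = μ • w) →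
      μ ≤ (dmax : ℝ) * ((dmax : ℝ) + 1) + 4 * (dmax : ℝ) ^ 2 / ((dmin : ℝ) + 1) := by
  rintro μ ⟨w, hw, h⟩
  set P := G.lapMatrix ℝ with hP
  set Dinv := Matrix.diagonal (fun l => ((G.degree l : ℝ) + 1)⁻¹) with hD
  set M := Matrix.diagonal (fun i => ∑ l, (P l i) ^ 2) with hM
  have hww0 : (0:ℝ) ≤ w ⬝ᵥ w := Finset.sum_nonneg fun i _ => mul_self_nonneg _
  have hww : (0:ℝ) < w ⬝ᵥ w := by
    rcases hww0.lt_or_eq with h1 | h1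
    · exact h1
    · exact absurd ((dotProduct_self_eq_zero).mp h1.symm) hw
  -- Mii bound
  have hMii : ∀ i, (∑ l, (P l i) ^ 2) ≤ (dmax:ℝ) * ((dmax:ℝ)+1) := by
    intro i
    have hterm : ∀ l, (P l i) ^ 2
        = (if l = i then (G.degree i : ℝ)^2 else 0) + (if G.Adj l i then (1:ℝ) else 0) := by
      intro l
      by_cases hl : l = i
      · subst hl
        simp [hP, SimpleGraph.lapMatrix, SimpleGraph.degMatrix, SimpleGraph.adjMatrix]
      · simp only [hP, SimpleGraph.lapMatrix, SimpleGraph.degMatrix, SimpleGraph.adjMatrix,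
          Matrix.sub_apply, Matrix.of_apply, Matrix.diagonal_apply_ne _ hl, if_neg hl, zero_add]
        split <;> norm_num
    have hdeg : (∑ l, (if G.Adj l i then (1:ℝ) else 0)) = (G.degree i : ℝ) := by
      have : ∀ l, G.Adj l i ↔ G.Adj i l := fun l => G.adj_comm l i
      simp only [this]
      rw [Finset.sum_boole, ← SimpleGraph.neighborFinset_eq_filter,
        SimpleGraph.card_neighborFinset_eq_degree]
    have hsum : (∑ l, (P l i) ^ 2) = (G.degree i : ℝ)^2 + (G.degree i : ℝ) := by
      simp only [hterm, Finset.sum_add_distrib, hdeg, Finset.sum_ite_eq' Finset.univ i,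
        Finset.mem_univ, if_true]
    rw [hsum]
    have hd : (G.degree i : ℝ) ≤ (dmax : ℝ) := by exact_mod_cast hdmax i
    have hd0 : (0:ℝ) ≤ (G.degree i : ℝ) := Nat.cast_nonneg _
    nlinarith
  -- quadratic forms
  have hkey : μ * (w ⬝ᵥ w) ≤ ((dmax:ℝ) * ((dmax:ℝ)+1)) * (w ⬝ᵥ w) := by
    have h1 : w ⬝ᵥ ((M - Pᵀ * Dinv * P).mulVec w) = μ * (w ⬝ᵥ w) := by
      rw [h]; simp [dotProduct_smul, smul_eq_mul]
    have h2 : (0:ℝ) ≤ w ⬝ᵥ ((Pᵀ * Dinv * P).mulVec w) := by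
      have heq : (Pᵀ * Dinv * P).mulVec w = Pᵀ.mulVec (Dinv.mulVec (P.mulVec w)) := by
        rw [← mulVec_mulVec, ← mulVec_mulVec]
      rw [heq, dotProduct_mulVec, vecMul_transpose, hD]
      refine Finset.sum_nonneg fun i _ => ?_
      simp only [mulVec_diagonal]
      have h0 : (0:ℝ) ≤ ((G.degree i : ℝ) + 1)⁻¹ := by positivity
      have := mul_self_nonneg ((P.mulVec w) i)
      nlinarith
    have h3 : w ⬝ᵥ (M.mulVec w) ≤ ((dmax:ℝ) * ((dmax:ℝ)+1)) * (w ⬝ᵥ w) := by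
      rw [hM]
      unfold dotProduct
      rw [Finset.mul_sum]
      refine Finset.sum_le_sum fun i _ => ?_
      simp only [mulVec_diagonal]
      have := hMii i
      nlinarith [mul_self_nonneg (w i)]
    have h4 : w ⬝ᵥ ((M - Pᵀ * Dinv * P).mulVec w)
        = w ⬝ᵥ (M.mulVec w) - w ⬝ᵥ ((Pᵀ * Dinv * P).mulVec w) := by
      rw [sub_mulVec, dotProduct_sub]
    linarith
  have hμ : μ ≤ (dmax:ℝ) * ((dmax:ℝ)+1) := le_of_mul_le_mul_right (by linarith) hww
  have hextra : 0 ≤ 4 * (dmax : ℝ) ^ 2 / ((dmin : ℝ) + 1) := by positivity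
  linarith
end
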